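/- Let σ : Fin 6 → List (Fin 6) be the edge-rewriting substitution of the Sierpiński Arrowhead Curve: σ(p) = [(p+1) mod 6, p, (p+5) mod 6] for p even and σ(q) = [(q+5) mod 6, q, (q+1) mod 6] for q odd, extended to words by concatenation. Then for every k ≥ 0, the word σ^k([0]) has length 3^k and its total displacement equals 2^k · u(0); that is, the sum over the letters d of σ^k([0]) of the unit vectors u(d) equals (2^k, 0). In particular the k-th approximation of the arrowhead curve runs from the left corner 0 to the right corner 2^k·u(0) of the big triangle. -/

import Mathlib

/-!
Each letter `d` is replaced by three letters, and the displacement of `σ(d)` is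
`u(d + 1) + u(d) + u(d - 1) = (1 + 2 cos (π / 3)) u(d) = 2 u(d)`. So one substitution step
triples the length of any word and doubles its displacement.
-/

/-- The unit vector in direction `d·π/3`, viewing the plane as `ℂ`. -/
noncomputable def dirU (d : Fin 6) : ℂ :=
  Complex.exp ((d : ℕ) * Real.pi / 3 * Complex.I)

/-- The position sequence of a direction word: `p₀ = 0`, `p_{m+1} = p_m + dirU (ds_m)`. -/
noncomputable def posSeq (ds : List (Fin 6)) (m : ℕ) : ℂ :=
  ((ds.take m).map dirU).sum

/-- The edge-rewriting substitution of the Sierpiński Arrowhead Curve: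
`σ(p) = [p+1, p, p+5]` for `p` even and `σ(q) = [q+5, q, q+1]` for `q` odd
(addition in `Fin 6` is mod 6). -/
def sigmaAH (d : Fin 6) : List (Fin 6) :=
  if Even (d : ℕ) then [d + 1, d, d + 5] else [d + 5, d, d + 1]

/-- Application of the substitution to a word, letterwise and concatenated. -/
def sigmaStep (w : List (Fin 6)) : List (Fin 6) := (w.map sigmaAH).flatten

open Complex

lemma dirU_eq_pow (d : Fin 6) : dirU d = dirU 1 ^ (d : ℕ) := by
  rw [dirU, dirU, ← exp_nat_mul, Fin.val_one]
  ring_nf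

lemma dirU_one_pow_six : dirU 1 ^ 6 = 1 := by
  rw [dirU, ← exp_nat_mul, Fin.val_one, ← exp_two_pi_mul_I]
  ring_nf

lemma dirU_add (d e : Fin 6) : dirU (d + e) = dirU d * dirU e := by
  rw [dirU_eq_pow (d + e), dirU_eq_pow d, dirU_eq_pow e, Fin.val_add, ← pow_add,
    ← pow_eq_pow_mod _ dirU_one_pow_six]

lemma dirU_one_add_dirU_five : dirU 1 + dirU 5 = 1 := by
  have h5 : dirU 5 = exp (-(Real.pi / 3 : ℂ) * I) := by
    rw [dirU, eq_comm, ← mul_one (exp _), ← exp_two_pi_mul_I, ← exp_add,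
      show ((5 : Fin 6) : ℕ) = 5 from rfl]
    congr 1
    push_cast
    ring
  have hcos : cos (Real.pi / 3 : ℂ) = 1 / 2 := by
    rw [← ofReal_ofNat, ← ofReal_div, ← ofReal_cos, Real.cos_pi_div_three]
    norm_num
  rw [h5, dirU, Fin.val_one, Nat.cast_one, one_mul, ← two_cos, hcos]
  norm_num

lemma dirU_add_one_add_dirU_add_five (d : Fin 6) : dirU (d + 1) + dirU (d + 5) = dirU d := by
  rw [dirU_add, dirU_add, ← mul_add, dirU_one_add_dirU_five, mul_one]

lemma sum_map_dirU_sigmaAH (d : Fin 6) : ((sigmaAH d).map dirU).sum = 2 * dirU d := by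
  rw [sigmaAH]
  split <;> simp only [List.map_cons, List.map_nil, List.sum_cons, List.sum_nil] <;>
    linear_combination dirU_add_one_add_dirU_add_five d

namespace List

variable {α β : Type*}

lemma length_flatten_map_of_length_eq (τ : α → List β) {n : ℕ}
    (h : ∀ a, (τ a).length = n) (w : List α) : (w.map τ).flatten.length = n * w.length := by
  simp [length_flatten, map_map, Function.comp_def, h, mul_comm]

lemma sum_map_flatten_map_of_sum_map_eq_mul {M : Type*} [Semiring M] (τ : α → List β)
    (f : β → M) (g : α → M) {c : M} (h : ∀ a, ((τ a).map f).sum = c * g a) (w : List α) :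
    ((w.map τ).flatten.map f).sum = c * (w.map g).sum := by
  simp [map_flatten, sum_flatten, map_map, Function.comp_def, h, sum_map_mul_left]

end List

lemma length_sigmaStep (w : List (Fin 6)) : (sigmaStep w).length = 3 * w.length :=
  List.length_flatten_map_of_length_eq _ (fun d => by unfold sigmaAH; split <;> rfl) w

lemma sum_map_dirU_sigmaStep (w : List (Fin 6)) :
    ((sigmaStep w).map dirU).sum = 2 * (w.map dirU).sum :=
  List.sum_map_flatten_map_of_sum_map_eq_mul _ _ _ sum_map_dirU_sigmaAH w

/-- For every `k ≥ 0`, the word `σ^k([0])` has length `3^k` and its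
total displacement is `2^k · u(0)`: the `k`-th approximation of the arrowhead curve runs
from the left corner `0` to the right corner `2^k · u(0)` of the big triangle. -/
theorem arrowhead_length_and_displacement (k : ℕ) :
    (sigmaStep^[k] [0]).length = 3 ^ k ∧
    ((sigmaStep^[k] [0]).map dirU).sum = (2 ^ k : ℂ) * dirU 0 := by
  induction k with
  | zero => simp
  | succ n ih =>
    rw [Function.iterate_succ_apply', length_sigmaStep, sum_map_dirU_sigmaStep, ih.1, ih.2]
    constructor <;> ring
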